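/- arXiv:2105.07017 — 2 statements merged into one kernel-verified Lean document; each statement's English description precedes it below -/
import Mathlib

section
/- With U, U_⊥, A ∈ so(p), B ∈ ℝ^{(n−p)×p} and γ(t) = (U U_⊥) exp_m(t[[0,−Bᵀ],[B,0]]) [exp_m(tA); 0] as above, the covariant acceleration D_tγ′(t) = γ″(t) + γ′(t)γ′(t)ᵀγ(t) + γ(t)((γ(t)ᵀγ′(t))² + γ′(t)ᵀγ′(t)) vanishes for all t ∈ ℝ if and only if BA = 0; i.e. the economy-size quasi-geodesic γ is a Riemannian geodesic of the canonical metric if and only if BA = 0. -/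
open Matrix NormedSpace

attribute [local instance] Matrix.frobeniusNormedAddCommGroup Matrix.frobeniusNormedSpace

/-- The economy-size quasi-geodesic in lifted form. -/
noncomputable def econQG (n p : ℕ) (U : Matrix (Fin n) (Fin p) ℝ)
    (Uperp : Matrix (Fin n) (Fin (n - p)) ℝ)
    (A : Matrix (Fin p) (Fin p) ℝ) (B : Matrix (Fin (n - p)) (Fin p) ℝ) (t : ℝ) :
    Matrix (Fin n) (Fin p) ℝ :=
  fromCols U Uperp * NormedSpace.exp (t • fromBlocks 0 (-Bᵀ) B 0) * fromRows (NormedSpace.exp (t • A)) 0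

/-- The orthogonal completion curve of the economy-size quasi-geodesic. -/
noncomputable def econQGperp (n p : ℕ) (U : Matrix (Fin n) (Fin p) ℝ)
    (Uperp : Matrix (Fin n) (Fin (n - p)) ℝ)
    (A : Matrix (Fin p) (Fin p) ℝ) (B : Matrix (Fin (n - p)) (Fin p) ℝ) (t : ℝ) :
    Matrix (Fin n) (Fin (n - p)) ℝ :=
  fromCols U Uperp * NormedSpace.exp (t • fromBlocks 0 (-Bᵀ) B 0) * fromRows 0 1

attribute [local instance] Matrix.frobeniusNormedRing Matrix.frobeniusNormedAlgebra

noncomputable def NN (n p : ℕ) : Matrix (Fin p ⊕ Fin (n - p)) (Fin p) ℝ := fromRows 1 0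
noncomputable def SS {n p : ℕ} (B : Matrix (Fin (n - p)) (Fin p) ℝ) :
    Matrix (Fin p ⊕ Fin (n - p)) (Fin p ⊕ Fin (n - p)) ℝ := fromBlocks 0 (-Bᵀ) B 0

lemma hasDerivAt_sandwich {l m q r : Type*} [Fintype l] [Fintype m] [Fintype q] [Fintype r]
    (C : Matrix l m ℝ) (D : Matrix q r ℝ) {f : ℝ → Matrix m q ℝ} {f' : Matrix m q ℝ} {t : ℝ}
    (hf : HasDerivAt f f' t) :
    HasDerivAt (fun s => C * f s * D) (C * f' * D) t := by
  have hlin : IsLinearMap ℝ (fun M : Matrix m q ℝ => C * M * D) :=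
    ⟨fun M₁ M₂ => by rw [Matrix.mul_add, Matrix.add_mul],
     fun c M => by rw [Matrix.mul_smul, Matrix.smul_mul]⟩
  have h := ((IsLinearMap.mk' _ hlin).toContinuousLinearMap.hasFDerivAt
      (x := f t)).comp_hasDerivAt t hf
  exact h

lemma exp_skew_orth {m : Type*} [Fintype m] [DecidableEq m] (M : Matrix m m ℝ)
    (hM : Mᵀ = -M) (t : ℝ) :
    ((NormedSpace.exp (t • M))ᵀ * NormedSpace.exp (t • M) = 1) ∧ (NormedSpace.exp (t • M) * (NormedSpace.exp (t • M))ᵀ = 1) := by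
  have h1 : (NormedSpace.exp (t • M))ᵀ = NormedSpace.exp (-(t • M)) := by
    rw [← Matrix.exp_transpose, Matrix.transpose_smul, hM, smul_neg]
  constructor
  · rw [h1, ← Matrix.exp_add_of_commute _ _ ((Commute.refl (t • M)).neg_left), neg_add_cancel, exp_zero]
  · rw [h1, ← Matrix.exp_add_of_commute _ _ ((Commute.refl (t • M)).neg_right), add_neg_cancel, exp_zero]

lemma fromRows_add {m₁ m₂ q : Type*} (a c : Matrix m₁ q ℝ) (b d : Matrix m₂ q ℝ) :
    fromRows a b + fromRows c d = fromRows (a + c) (b + d) := by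
  ext (i | i) j <;> simp

set_option maxHeartbeats 1000000 in
lemma keyCalc (n p : ℕ) (Q : Matrix (Fin n) (Fin p ⊕ Fin (n - p)) ℝ)
    (X : Matrix (Fin p ⊕ Fin (n - p)) (Fin p ⊕ Fin (n - p)) ℝ)
    (Y A : Matrix (Fin p) (Fin p) ℝ) (B : Matrix (Fin (n - p)) (Fin p) ℝ)
    (hQ : Qᵀ * Q = 1) (hX : Xᵀ * X = 1) (hY : Yᵀ * Y = 1) (hY2 : Y * Yᵀ = 1)
    (hA : Aᵀ = -A) :
    (Q * ((X * SS B * SS B * (NN n p * Y * (NN n p)ᵀ) +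
            X * SS B * (NN n p * (Y * A) * (NN n p)ᵀ)) +
          (X * SS B * (NN n p * (Y * A) * (NN n p)ᵀ) +
            X * (NN n p * (Y * A * A) * (NN n p)ᵀ))) * NN n p) +
      (Q * (X * SS B * (NN n p * Y * (NN n p)ᵀ) + X * (NN n p * (Y * A) * (NN n p)ᵀ)) * NN n p) *
        (Q * (X * SS B * (NN n p * Y * (NN n p)ᵀ) + X * (NN n p * (Y * A) * (NN n p)ᵀ)) * NN n p)ᵀ *
        (Q * (X * (NN n p * Y * (NN n p)ᵀ)) * NN n p) +
      (Q * (X * (NN n p * Y * (NN n p)ᵀ)) * NN n p) *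
        (((Q * (X * (NN n p * Y * (NN n p)ᵀ)) * NN n p)ᵀ *
            (Q * (X * SS B * (NN n p * Y * (NN n p)ᵀ) + X * (NN n p * (Y * A) * (NN n p)ᵀ)) *
              NN n p)) ^ 2 +
          (Q * (X * SS B * (NN n p * Y * (NN n p)ᵀ) + X * (NN n p * (Y * A) * (NN n p)ᵀ)) *
              NN n p)ᵀ *
            (Q * (X * SS B * (NN n p * Y * (NN n p)ᵀ) + X * (NN n p * (Y * A) * (NN n p)ᵀ)) *
              NN n p)) =
    Q * (X * (fromRows 0 (B * (Y * A)) : Matrix (Fin p ⊕ Fin (n - p)) (Fin p) ℝ)) := by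
  have hQc : ∀ (M : Matrix (Fin p ⊕ Fin (n - p)) (Fin p) ℝ), Qᵀ * (Q * M) = M := fun M => by
    rw [← Matrix.mul_assoc, hQ, Matrix.one_mul]
  have hXc : ∀ (M : Matrix (Fin p ⊕ Fin (n - p)) (Fin p) ℝ), Xᵀ * (X * M) = M := fun M => by
    rw [← Matrix.mul_assoc, hX, Matrix.one_mul]
  have hYc : ∀ (M : Matrix (Fin p) (Fin p) ℝ), Yᵀ * (Y * M) = M := fun M => by
    rw [← Matrix.mul_assoc, hY, Matrix.one_mul]
  have hY2c : ∀ (M : Matrix (Fin p) (Fin p) ℝ), Y * (Yᵀ * M) = M := fun M => by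
    rw [← Matrix.mul_assoc, hY2, Matrix.one_mul]
  simp only [NN, SS, Matrix.transpose_mul, Matrix.transpose_add, Matrix.transpose_transpose, Matrix.transpose_fromRows,
    Matrix.fromBlocks_transpose, Matrix.transpose_one, Matrix.transpose_zero,
    Matrix.transpose_neg, hA, pow_two, Matrix.mul_assoc, Matrix.mul_add, Matrix.add_mul,
    Matrix.neg_mul, Matrix.mul_neg, neg_neg, Matrix.fromRows_mul, Matrix.mul_fromCols,
    Matrix.fromBlocks_mul_fromRows, Matrix.fromCols_mul_fromRows,
    Matrix.one_mul, Matrix.mul_one, Matrix.zero_mul, Matrix.mul_zero, add_zero, zero_add,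
    neg_zero, hQc, hXc, hYc, hY2c, hY, hY2]
  simp only [Matrix.fromRows_zero, ← Matrix.mul_neg, Matrix.fromRows_neg, ← Matrix.mul_add,
    fromRows_add]
  congr 2
  simp only [Matrix.mul_neg, Matrix.neg_mul, neg_zero, neg_neg, add_zero, zero_add,
    fromRows_add]
  rw [Matrix.fromRows_ext_iff]
  constructor <;> abel

lemma master (n p : ℕ) (U : Matrix (Fin n) (Fin p) ℝ)
    (Uperp : Matrix (Fin n) (Fin (n - p)) ℝ)
    (A : Matrix (Fin p) (Fin p) ℝ) (B : Matrix (Fin (n - p)) (Fin p) ℝ)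
    (hO₁ : (fromCols U Uperp)ᵀ * fromCols U Uperp = 1)
    (hA : Aᵀ = -A) (t : ℝ) :
    deriv (deriv (econQG n p U Uperp A B)) t +
        deriv (econQG n p U Uperp A B) t * (deriv (econQG n p U Uperp A B) t)ᵀ *
          econQG n p U Uperp A B t +
        econQG n p U Uperp A B t *
          (((econQG n p U Uperp A B t)ᵀ * deriv (econQG n p U Uperp A B) t) ^ 2 +
            (deriv (econQG n p U Uperp A B) t)ᵀ * deriv (econQG n p U Uperp A B) t) =
      fromCols U Uperp * (NormedSpace.exp (t • SS B) * (fromRows 0 (B * (NormedSpace.exp (t • A) * A)) : Matrix (Fin p ⊕ Fin (n - p)) (Fin p) ℝ)) := by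
  set Q := fromCols U Uperp with hQdef
  have hgam : econQG n p U Uperp A B =
      fun u => Q * (NormedSpace.exp (u • SS B) * (NN n p * NormedSpace.exp (u • A) * (NN n p)ᵀ)) * NN n p := by
    funext u
    simp [econQG, SS, NN, Matrix.mul_assoc, Matrix.fromRows_mul, Matrix.transpose_fromRows,
      Matrix.fromCols_mul_fromRows, hQdef]
    exact Matrix.mul_assoc _ _ _
  have hXd : ∀ u : ℝ, HasDerivAt (fun s : ℝ => NormedSpace.exp (s • SS B))
      (NormedSpace.exp (u • SS B) * SS B) u := fun u => hasDerivAt_exp_smul_const (SS B) u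
  have hYd : ∀ u : ℝ, HasDerivAt (fun s : ℝ => NormedSpace.exp (s • A)) (NormedSpace.exp (u • A) * A) u :=
    fun u => hasDerivAt_exp_smul_const A u
  have hLYd : ∀ u : ℝ, HasDerivAt (fun s : ℝ => NN n p * NormedSpace.exp (s • A) * (NN n p)ᵀ)
      (NN n p * (NormedSpace.exp (u • A) * A) * (NN n p)ᵀ) u :=
    fun u => hasDerivAt_sandwich _ _ (hYd u)
  have hd1 : deriv (econQG n p U Uperp A B) = fun u =>
      Q * (NormedSpace.exp (u • SS B) * SS B * (NN n p * NormedSpace.exp (u • A) * (NN n p)ᵀ) +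
        NormedSpace.exp (u • SS B) * (NN n p * (NormedSpace.exp (u • A) * A) * (NN n p)ᵀ)) * NN n p := by
    funext u
    rw [hgam]
    exact (hasDerivAt_sandwich Q (NN n p) ((hXd u).mul (hLYd u))).deriv
  have hLYAd : HasDerivAt (fun s : ℝ => NN n p * (NormedSpace.exp (s • A) * A) * (NN n p)ᵀ)
      (NN n p * (NormedSpace.exp (t • A) * A * A) * (NN n p)ᵀ) t :=
    hasDerivAt_sandwich _ _ ((hYd t).mul_const A)
  have hd2 : deriv (deriv (econQG n p U Uperp A B)) t =
      Q * ((NormedSpace.exp (t • SS B) * SS B * SS B * (NN n p * NormedSpace.exp (t • A) * (NN n p)ᵀ) +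
            NormedSpace.exp (t • SS B) * SS B * (NN n p * (NormedSpace.exp (t • A) * A) * (NN n p)ᵀ)) +
          (NormedSpace.exp (t • SS B) * SS B * (NN n p * (NormedSpace.exp (t • A) * A) * (NN n p)ᵀ) +
            NormedSpace.exp (t • SS B) * (NN n p * (NormedSpace.exp (t • A) * A * A) * (NN n p)ᵀ))) * NN n p := by
    rw [hd1]
    exact (hasDerivAt_sandwich Q (NN n p)
      ((((hXd t).mul_const (SS B)).mul (hLYd t)).add ((hXd t).mul hLYAd))).deriv
  rw [hd2, hd1, hgam]
  exact keyCalc n p Q (NormedSpace.exp (t • SS B)) (NormedSpace.exp (t • A)) A B hO₁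
    (exp_skew_orth (SS B) (by simp [SS, Matrix.fromBlocks_transpose, Matrix.fromBlocks_neg]) t).1
    (exp_skew_orth A hA t).1 (exp_skew_orth A hA t).2 hA

/-- the economy-size quasi-geodesic is a Riemannian geodesic of the canonical
metric (its covariant acceleration vanishes identically) if and only if `BA = 0`. -/
theorem stmt9 (n p : ℕ) (U : Matrix (Fin n) (Fin p) ℝ)
    (Uperp : Matrix (Fin n) (Fin (n - p)) ℝ)
    (A : Matrix (Fin p) (Fin p) ℝ) (B : Matrix (Fin (n - p)) (Fin p) ℝ)
    (hU : Uᵀ * U = 1)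
    (hO₁ : (fromCols U Uperp)ᵀ * fromCols U Uperp = 1)
    (hO₂ : fromCols U Uperp * (fromCols U Uperp)ᵀ = 1)
    (hA : Aᵀ = -A) :
    (∀ t : ℝ,
      deriv (deriv (econQG n p U Uperp A B)) t +
          deriv (econQG n p U Uperp A B) t * (deriv (econQG n p U Uperp A B) t)ᵀ *
            econQG n p U Uperp A B t +
          econQG n p U Uperp A B t *
            (((econQG n p U Uperp A B t)ᵀ * deriv (econQG n p U Uperp A B) t) ^ 2 +
              (deriv (econQG n p U Uperp A B) t)ᵀ * deriv (econQG n p U Uperp A B) t) = 0)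
      ↔ B * A = 0 := by
  constructor
  · intro h
    have h0 := h 0
    rw [master n p U Uperp A B hO₁ hA 0] at h0
    simp only [zero_smul, exp_zero, Matrix.one_mul, Matrix.mul_one] at h0
    have h1 := congrArg (fun M => (fromCols U Uperp)ᵀ * M) h0
    simp only [← Matrix.mul_assoc, hO₁, Matrix.one_mul, Matrix.mul_zero] at h1
    have h2 : fromRows (0 : Matrix (Fin p) (Fin p) ℝ) (B * A) =
        fromRows (0 : Matrix (Fin p) (Fin p) ℝ) 0 := by
      rw [h1, Matrix.fromRows_zero]
    exact ((Matrix.fromRows_ext_iff _ _ _ _).mp h2).2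
  · intro hBA t
    rw [master n p U Uperp A B hO₁ hA t]
    have hc : NormedSpace.exp (t • A) * A = A * NormedSpace.exp (t • A) :=
      (((Commute.refl A).smul_left t).exp_left)
    have hz : B * (A * NormedSpace.exp (t • A)) = 0 := by
      rw [← Matrix.mul_assoc, hBA, Matrix.zero_mul]
    rw [hc, hz]
    simp
end

section
/- Let U, Q be real n×p matrices with UᵀU = QᵀQ = I_p, UᵀQ = 0, let A, C ∈ so(p) and B ∈ ℝ^{p×p}, and let ρ(t) = (U Q) exp_m(t[[A,−Bᵀ],[B,C]]) [I_p; 0]. Then the squared canonical norm of the velocity is constant: tr(ρ′(t)ᵀ(I_n − ½ρ(t)ρ(t)ᵀ)ρ′(t)) = ½·tr(AᵀA) + tr(BᵀB) for all t ∈ ℝ. -/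
open Matrix NormedSpace

attribute [local instance] Matrix.frobeniusNormedAddCommGroup Matrix.frobeniusNormedSpace

/-- The short economy-size quasi-geodesic `ρ(t) = (U Q) exp_m(t[[A,−Bᵀ],[B,C]]) [I_p; 0]`. -/
noncomputable def shortQG (n p : ℕ) (U Q : Matrix (Fin n) (Fin p) ℝ)
    (A B C : Matrix (Fin p) (Fin p) ℝ) (t : ℝ) : Matrix (Fin n) (Fin p) ℝ :=
  fromCols U Q * NormedSpace.exp (t • fromBlocks A (-Bᵀ) B C) * fromRows 1 0

/-- The accompanying curve `ρ⊥(t) = (U Q) exp_m(t[[A,−Bᵀ],[B,C]]) [0; I_p]`. -/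
noncomputable def shortQGperp (n p : ℕ) (U Q : Matrix (Fin n) (Fin p) ℝ)
    (A B C : Matrix (Fin p) (Fin p) ℝ) (t : ℝ) : Matrix (Fin n) (Fin p) ℝ :=
  fromCols U Q * NormedSpace.exp (t • fromBlocks A (-Bᵀ) B C) * fromRows 0 1

attribute [local instance] Matrix.frobeniusNormedRing Matrix.frobeniusNormedAlgebra

section Aux

variable {n p : ℕ}

/-- `X ↦ W * X * R` as a linear map. -/
def mulMulLin (W : Matrix (Fin n) (Fin p ⊕ Fin p) ℝ)
    (R : Matrix (Fin p ⊕ Fin p) (Fin p) ℝ) :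
    Matrix (Fin p ⊕ Fin p) (Fin p ⊕ Fin p) ℝ →ₗ[ℝ] Matrix (Fin n) (Fin p) ℝ where
  toFun X := W * X * R
  map_add' X Y := by rw [Matrix.mul_add, Matrix.add_mul]
  map_smul' c X := by
    simp only [RingHom.id_apply, Matrix.mul_smul, Matrix.smul_mul]

lemma shortQG_hasDerivAt (U Q : Matrix (Fin n) (Fin p) ℝ)
    (A B C : Matrix (Fin p) (Fin p) ℝ) (t : ℝ) :
    HasDerivAt (shortQG n p U Q A B C)
      (fromCols U Q * (NormedSpace.exp (t • fromBlocks A (-Bᵀ) B C) * fromBlocks A (-Bᵀ) B C) *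
        fromRows 1 0) t := by
  set M := fromBlocks A (-Bᵀ) B C
  have h1 : HasDerivAt (fun u : ℝ => NormedSpace.exp (u • M)) (NormedSpace.exp (t • M) * M) t :=
    hasDerivAt_exp_smul_const M t
  have h2 := ((mulMulLin (fromCols U Q) (fromRows 1 0)).toContinuousLinearMap.hasFDerivAt
    (x := NormedSpace.exp (t • M))).comp_hasDerivAt t h1
  exact h2

lemma conj_fromRows (a b c d : Matrix (Fin p) (Fin p) ℝ) :
    ((fromRows (1 : Matrix (Fin p) (Fin p) ℝ) 0 : Matrix (Fin p ⊕ Fin p) (Fin p) ℝ))ᵀ * fromBlocks a b c d * (fromRows 1 0 : Matrix (Fin p ⊕ Fin p) (Fin p) ℝ) = a := by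
  rw [transpose_fromRows, transpose_one, transpose_zero, Matrix.mul_assoc,
    fromBlocks_mul_fromRows, fromCols_mul_fromRows]
  simp

end Aux

/-- the short economy-size quasi-geodesic has constant canonical speed:
`tr(ρ′(t)ᵀ(I − ½ρ(t)ρ(t)ᵀ)ρ′(t)) = ½ tr(AᵀA) + tr(BᵀB)`. -/
theorem stmt14 (n p : ℕ) (U Q : Matrix (Fin n) (Fin p) ℝ)
    (A B C : Matrix (Fin p) (Fin p) ℝ)
    (hU : Uᵀ * U = 1) (hQ : Qᵀ * Q = 1) (hUQ : Uᵀ * Q = 0)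
    (hA : Aᵀ = -A) (hC : Cᵀ = -C) :
    ∀ t : ℝ,
      trace ((deriv (shortQG n p U Q A B C) t)ᵀ *
          ((1 : Matrix (Fin n) (Fin n) ℝ) -
            (1 / 2 : ℝ) • (shortQG n p U Q A B C t * (shortQG n p U Q A B C t)ᵀ)) *
          deriv (shortQG n p U Q A B C) t) =
        (1 / 2 : ℝ) * trace (Aᵀ * A) + trace (Bᵀ * B) := by
  intro t
  set M : Matrix (Fin p ⊕ Fin p) (Fin p ⊕ Fin p) ℝ := fromBlocks A (-Bᵀ) B C with hM
  set W : Matrix (Fin n) (Fin p ⊕ Fin p) ℝ := fromCols U Q with hWdef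
  set R : Matrix (Fin p ⊕ Fin p) (Fin p) ℝ := fromRows 1 0 with hRdef
  set E : Matrix (Fin p ⊕ Fin p) (Fin p ⊕ Fin p) ℝ := NormedSpace.exp (t • M) with hEdef
  -- skewness of M
  have hMt : Mᵀ = -M := by
    rw [hM, fromBlocks_transpose, hA, hC, transpose_neg, transpose_transpose]
    ext i j
    cases i <;> cases j <;> simp [fromBlocks]
  -- W orthonormal columns
  have hW : Wᵀ * W = 1 := by
    rw [hWdef, transpose_fromCols, fromRows_mul_fromCols, hU, hQ, hUQ]
    have hQU : Qᵀ * U = 0 := by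
      have := congrArg transpose hUQ
      rwa [transpose_mul, transpose_transpose, transpose_zero] at this
    rw [hQU, ← fromBlocks_one]
  -- E orthogonal
  have hE : Eᵀ * E = 1 := by
    rw [hEdef, ← Matrix.exp_transpose, transpose_smul, hMt, smul_neg,
      ← Matrix.exp_add_of_commute _ _ ((Commute.refl (t • M)).neg_left),
      neg_add_cancel, exp_zero]
  -- the derivative
  have hderiv : deriv (shortQG n p U Q A B C) t = W * (E * M) * R :=
    (shortQG_hasDerivAt U Q A B C t).deriv
  have hρ : shortQG n p U Q A B C t = W * E * R := rfl
  rw [hderiv, hρ]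
  -- velocity gram matrix
  have hWc : ∀ X : Matrix (Fin p ⊕ Fin p) (Fin p) ℝ, Wᵀ * (W * X) = X := fun X => by
    rw [← Matrix.mul_assoc, hW, Matrix.one_mul]
  have hEc : ∀ X : Matrix (Fin p ⊕ Fin p) (Fin p) ℝ, Eᵀ * (E * X) = X := fun X => by
    rw [← Matrix.mul_assoc, hE, Matrix.one_mul]
  have key1 : (W * (E * M) * R)ᵀ * (W * (E * M) * R) = Rᵀ * (Mᵀ * M) * R := by
    simp only [transpose_mul, Matrix.mul_assoc]
    rw [hWc, hEc]
  have key2 : (W * E * R)ᵀ * (W * (E * M) * R) = Rᵀ * M * R := by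
    simp only [transpose_mul, Matrix.mul_assoc]
    rw [hWc, hEc]
  -- block computations
  have hMtM : Rᵀ * (Mᵀ * M) * R = Aᵀ * A + Bᵀ * B := by
    rw [hM, hRdef, fromBlocks_transpose, fromBlocks_multiply, conj_fromRows]
  have hMR : Rᵀ * M * R = A := by rw [hM, hRdef, conj_fromRows]
  -- put it together
  have expand : (W * (E * M) * R)ᵀ *
      ((1 : Matrix (Fin n) (Fin n) ℝ) - (1 / 2 : ℝ) • (W * E * R * (W * E * R)ᵀ)) *
      (W * (E * M) * R)
      = (W * (E * M) * R)ᵀ * (W * (E * M) * R) -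
        (1/2 : ℝ) • (((W * E * R)ᵀ * (W * (E * M) * R))ᵀ *
          ((W * E * R)ᵀ * (W * (E * M) * R))) := by
    rw [Matrix.mul_sub, Matrix.sub_mul, Matrix.mul_one]
    congr 1
    rw [Matrix.mul_smul, Matrix.smul_mul]
    congr 1
    simp only [transpose_mul, transpose_transpose, Matrix.mul_assoc]
  rw [expand, key1, key2, hMtM, hMR]
  rw [trace_sub, trace_add, trace_smul, smul_eq_mul]
  ring
end
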